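/- For the cycle graph Circ_n (n ≥ 3), the number of κ-equivalence classes of acyclic orientations under source-to-sink operations is n − 1; i.e., κ(Circ_n) = n − 1. -/

import Mathlib

/-
Record an orientation of the `n`-cycle by which edges `{i, i + 1}` point clockwise, `i → i + 1`.
It is acyclic iff some edge points clockwise and some counter-clockwise: otherwise the edges form
a directed cycle around the whole graph, and if the edge `{t, t + 1}` points counter-clockwise,
cutting the cycle there leaves a path carrying a potential that increases along every edge,
including `t + 1 → t` as soon as one edge is clockwise. At a source `v` the edges `{v - 1, v}` and
`{v, v + 1}` point in opposite senses, so the click at `v` permutes the clockwise pattern by the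
transposition `(v - 1 v)`; hence the number of clockwise edges is invariant. Conversely, every
transposition `(v - 1 v)` is realised by a click or the inverse of one, and these transpositions
generate the symmetric group, so two acyclic orientations with the same number `k ∈ [1, n - 1]`
of clockwise edges are equivalent.
-/

structure Orient {n : ℕ} (Y : SimpleGraph (Fin n)) where
  dir : Fin n → Fin n → Prop
  dir_adj : ∀ i j, dir i j → Y.Adj i j
  dir_iff : ∀ i j, Y.Adj i j → (dir i j ↔ ¬ dir j i)

def IsAcyc {n : ℕ} {Y : SimpleGraph (Fin n)} (o : Orient Y) : Prop :=
  ∀ v, ¬ Relation.TransGen o.dir v v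

def IsSource {n : ℕ} {Y : SimpleGraph (Fin n)} (o : Orient Y) (v : Fin n) : Prop :=
  ∀ j, ¬ o.dir j v

def ClickRel {n : ℕ} {Y : SimpleGraph (Fin n)} (o o' : Orient Y) : Prop :=
  ∃ v, IsSource o v ∧
    ∀ i j, o'.dir i j ↔ (if i = v ∨ j = v then o.dir j i else o.dir i j)

def circGraph (n : ℕ) : SimpleGraph (Fin n) :=
  SimpleGraph.fromRel (fun i j => (i.val + 1) % n = j.val)

open Equiv Relation

variable {n : ℕ}

theorem Orient.ext {Y : SimpleGraph (Fin n)} {o o' : Orient Y}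
    (h : ∀ i j, o.dir i j ↔ o'.dir i j) : o = o' := by
  cases o
  cases o'
  congr
  funext i j
  exact propext (h i j)

def Orient.reverseAt {Y : SimpleGraph (Fin n)} (o : Orient Y) (v : Fin n) : Orient Y where
  dir i j := if i = v ∨ j = v then o.dir j i else o.dir i j
  dir_adj i j h := by
    split_ifs at h
    · exact (o.dir_adj j i h).symm
    · exact o.dir_adj i j h
  dir_iff i j hij := by
    by_cases hv : i = v ∨ j = v
    · rw [if_pos hv, if_pos hv.symm]
      exact o.dir_iff j i hij.symm
    · rw [if_neg hv, if_neg (mt Or.symm hv)]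
      exact o.dir_iff i j hij

theorem clickRel_iff_exists_reverseAt {Y : SimpleGraph (Fin n)} {o o' : Orient Y} :
    ClickRel o o' ↔ ∃ v, IsSource o v ∧ o' = o.reverseAt v :=
  exists_congr fun _ => and_congr_right fun _ =>
    ⟨fun h => Orient.ext h, fun h => h ▸ fun _ _ => Iff.rfl⟩

theorem isAcyc_of_potential {Y : SimpleGraph (Fin n)} {o : Orient Y} (φ : Fin n → ℤ)
    (hφ : ∀ i j, o.dir i j → φ i < φ j) : IsAcyc o := fun v hv => by
  have h := TransGen.lift φ hφ v v hv
  rw [transGen_eq_self] at h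
  exact lt_irrefl _ h

section Cycle

open Fin.CommRing

variable [NeZero n]

theorem Fin.val_add_one_of_ne_neg_one {y : Fin n} (hy : y ≠ -1) : (y + 1).val = y.val + 1 := by
  obtain ⟨m, rfl⟩ := Nat.exists_eq_add_one_of_ne_zero (NeZero.ne n)
  rw [Fin.val_add_one, if_neg]
  rintro rfl
  exact hy (Fin.ext (by simp))

theorem Fin.val_neg_one : (-1 : Fin n).val = n - 1 := by
  obtain ⟨m, rfl⟩ := Nat.exists_eq_add_one_of_ne_zero (NeZero.ne n)
  simp

theorem Fin.add_one_add_one_ne (hn : 3 ≤ n) (i : Fin n) : i + 1 + 1 ≠ i := fun h => by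
  have := congrArg Fin.val (add_eq_left.1 ((add_assoc i 1 1).symm.trans h))
  rw [Fin.val_add, Fin.val_one', Nat.mod_eq_of_lt (by omega : 1 < n),
    Nat.mod_eq_of_lt (by omega : 2 < n)] at this
  simp at this

theorem Fin.val_add_one_sub_of_ne {x b : Fin n} (h : x + 1 ≠ b) :
    (x + 1 - b).val = (x - b).val + 1 := by
  rw [add_sub_right_comm]
  exact Fin.val_add_one_of_ne_neg_one fun h' =>
    h (sub_eq_zero.1 (by rw [add_sub_right_comm, h', neg_add_cancel]))

theorem Fin.transGen_self_of_forall_add_one {r : Fin n → Fin n → Prop} (h : ∀ i, r i (i + 1))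
    (i : Fin n) : TransGen r i i := by
  have walk : ∀ k : ℕ, TransGen r i (i + ((k + 1 : ℕ) : Fin n)) := by
    intro k
    induction k with
    | zero => simpa using TransGen.single (h i)
    | succ k ih =>
      convert ih.tail (h _) using 1
      push_cast
      ring
  simpa [Nat.sub_add_cancel (NeZero.one_le : 1 ≤ n)] using walk (n - 1)

theorem Fin.mclosure_swap_sub_one :
    Submonoid.closure (Set.range fun v : Fin n => swap (v - 1) v) = ⊤ := by
  obtain ⟨m, rfl⟩ := Nat.exists_eq_add_one_of_ne_zero (NeZero.ne n)
  refine top_unique ((Perm.mclosure_swap_castSucc_succ m).ge.trans (Submonoid.closure_mono ?_))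
  rintro _ ⟨i, rfl⟩
  exact ⟨i.succ, by simp only [← Fin.coeSucc_eq_succ, add_sub_cancel_right]⟩

theorem circGraph_adj_iff (hn : 1 < n) {i j : Fin n} :
    (circGraph n).Adj i j ↔ j = i + 1 ∨ i = j + 1 := by
  have hr : ∀ a b : Fin n, (a.val + 1) % n = b.val ↔ b = a + 1 := fun a b => by
    rw [Fin.ext_iff, Fin.val_add, Fin.val_one', Nat.mod_eq_of_lt hn, eq_comm]
  have hne : ∀ a : Fin n, a ≠ a + 1 := fun a h => by
    have := congrArg Fin.val (add_eq_left.1 h.symm)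
    rw [Fin.val_one', Nat.mod_eq_of_lt hn] at this
    simp at this
  simp only [circGraph, SimpleGraph.fromRel_adj, hr]
  refine ⟨fun h => h.2, fun h => ⟨?_, h⟩⟩
  rcases h with rfl | rfl
  · exact hne i
  · exact (hne j).symm

open Classical in
noncomputable def Orient.clockwise (o : Orient (circGraph n)) (i : Fin n) : Bool :=
  decide (o.dir i (i + 1))

theorem Orient.clockwise_eq_true_iff {o : Orient (circGraph n)} {i : Fin n} :
    o.clockwise i = true ↔ o.dir i (i + 1) := by
  simp [Orient.clockwise]

theorem Orient.dir_add_one_iff (hn : 1 < n) {o : Orient (circGraph n)} {i : Fin n} :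
    o.dir (i + 1) i ↔ o.clockwise i = false := by
  rw [← Bool.not_eq_true, clockwise_eq_true_iff,
    o.dir_iff i (i + 1) ((circGraph_adj_iff hn).2 (Or.inl rfl))]
  exact ⟨fun h h' => h' h, not_not.1⟩

theorem Orient.dir_iff_clockwise (hn : 1 < n) (o : Orient (circGraph n)) {i j : Fin n} :
    o.dir i j ↔
      (j = i + 1 ∧ o.clockwise i = true) ∨ (i = j + 1 ∧ o.clockwise j = false) := by
  constructor
  · intro h
    rcases (circGraph_adj_iff hn).1 (o.dir_adj i j h) with rfl | rfl
    · exact Or.inl ⟨rfl, clockwise_eq_true_iff.2 h⟩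
    · exact Or.inr ⟨rfl, (dir_add_one_iff hn).1 h⟩
  · rintro (⟨rfl, h⟩ | ⟨rfl, h⟩)
    · exact clockwise_eq_true_iff.1 h
    · exact (dir_add_one_iff hn).2 h

theorem Orient.clockwise_injective (hn : 1 < n) :
    Function.Injective (Orient.clockwise (n := n)) := fun o o' h =>
  Orient.ext fun i j => by rw [dir_iff_clockwise hn, dir_iff_clockwise hn, h]

theorem Orient.isSource_iff (hn : 1 < n) {o : Orient (circGraph n)} {v : Fin n} :
    IsSource o v ↔ o.clockwise (v - 1) = false ∧ o.clockwise v = true := by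
  constructor
  · intro hv
    refine ⟨Bool.eq_false_iff.2 fun h => hv (v - 1) ?_, ?_⟩
    · simpa using clockwise_eq_true_iff.1 h
    · exact Bool.not_eq_false _ ▸ fun h => hv (v + 1) ((dir_add_one_iff hn).2 h)
  · rintro ⟨hprev, hv⟩ j hj
    rcases (dir_iff_clockwise hn o).1 hj with ⟨hj, h⟩ | ⟨-, h⟩
    · rw [eq_sub_of_add_eq hj.symm, hprev] at h
      exact Bool.noConfusion h
    · rw [hv] at h
      exact Bool.noConfusion h

theorem Orient.clockwise_reverseAt (hn : 1 < n) {o : Orient (circGraph n)} {v : Fin n}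
    (hv : IsSource o v) : (o.reverseAt v).clockwise = o.clockwise ∘ swap (v - 1) v := by
  obtain ⟨hprev, hnext⟩ := (isSource_iff hn).1 hv
  funext x
  rw [Function.comp_apply, Bool.eq_iff_iff, clockwise_eq_true_iff]
  show (if x = v ∨ x + 1 = v then o.dir (x + 1) x else o.dir x (x + 1)) ↔ _
  by_cases hxv : x = v
  · subst hxv
    simp [hprev, hv (x + 1)]
  by_cases hxv' : x = v - 1
  · subst hxv'
    have hback : o.dir v (v - 1) := by simpa using (dir_add_one_iff hn).2 hprev
    simp [hnext, hback]
  · have : ¬ (x + 1 = v) := fun h => hxv' (eq_sub_of_add_eq h)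
    simp [hxv, hxv', this, swap_apply_of_ne_of_ne, clockwise_eq_true_iff]

def circOrient (hn : 3 ≤ n) (f : Fin n → Bool) : Orient (circGraph n) where
  dir i j := (j = i + 1 ∧ f i = true) ∨ (i = j + 1 ∧ f j = false)
  dir_adj i j h := (circGraph_adj_iff (by omega)).2 (h.imp And.left And.left)
  dir_iff i j hij := by
    rcases (circGraph_adj_iff (by omega)).1 hij with rfl | rfl
    · simp [(Fin.add_one_add_one_ne hn i).symm]
    · simp [(Fin.add_one_add_one_ne hn j).symm]

theorem clockwise_circOrient (hn : 3 ≤ n) (f : Fin n → Bool) :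
    (circOrient hn f).clockwise = f := by
  funext i
  rw [Bool.eq_iff_iff, Orient.clockwise_eq_true_iff]
  simp [circOrient, (Fin.add_one_add_one_ne hn i).symm]

/-- A potential on the path `b, b + 1, …, b - 1` obtained by cutting the cycle just before `b`. -/
def cutPotential (c : Fin n → Bool) (b x : Fin n) : ℤ :=
  ∑ j ∈ Finset.range (x - b).val, (if c (b + j) then (n : ℤ) else 0) - (x - b).val

theorem cutPotential_add_one (c : Fin n → Bool) {b x : Fin n} (hx : x + 1 ≠ b) :
    cutPotential c b (x + 1) = cutPotential c b x + (if c x then (n : ℤ) else 0) - 1 := by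
  simp only [cutPotential, Fin.val_add_one_sub_of_ne hx, Finset.sum_range_succ,
    Fin.cast_val_eq_self, add_sub_cancel]
  push_cast
  ring

theorem cutPotential_self (c : Fin n → Bool) (b : Fin n) : cutPotential c b b = 0 := by
  simp [cutPotential]

theorem cutPotential_sub_one_pos (c : Fin n → Bool) {b s : Fin n} (hs : c s = true)
    (hsb : s ≠ b - 1) : 0 < cutPotential c b (b - 1) := by
  have hlast : (b - 1 - b).val = n - 1 := by simp [Fin.val_neg_one]
  have hsn : (s - b).val < n - 1 := by
    have : (s - b).val ≠ (b - 1 - b).val := fun h => hsb (sub_left_inj.1 (Fin.val_injective h))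
    have := (s - b).isLt
    omega
  have hsum :
      (n : ℤ) ≤ ∑ j ∈ Finset.range (n - 1), (if c (b + j) then (n : ℤ) else 0) := by
    refine le_of_eq_of_le ?_ (Finset.single_le_sum (fun j _ => ?_) (Finset.mem_range.2 hsn))
    · simp [hs]
    · positivity
  rw [cutPotential, hlast, Nat.cast_sub (NeZero.one_le : 1 ≤ n), Nat.cast_one]
  linarith

theorem Orient.isAcyc_of_clockwise (hn : 1 < n) {o : Orient (circGraph n)} {s t : Fin n}
    (hs : o.clockwise s = true) (ht : o.clockwise t = false) : IsAcyc o := by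
  have hne : ∀ x, o.clockwise x = true → x + 1 ≠ t + 1 := fun x hx h => by
    rw [add_right_cancel h, ht] at hx
    exact Bool.noConfusion hx
  refine isAcyc_of_potential (cutPotential o.clockwise (t + 1)) fun i j hij => ?_
  rcases (dir_iff_clockwise hn o).1 hij with ⟨rfl, hi⟩ | ⟨rfl, hj⟩
  · rw [cutPotential_add_one _ (hne i hi), hi, if_pos rfl]
    linarith [(by exact_mod_cast hn : (1 : ℤ) < n)]
  · by_cases hjt : j = t
    · subst hjt
      have hst : s ≠ j + 1 - 1 := by
        rw [add_sub_cancel_right]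
        rintro rfl
        rw [ht] at hs
        exact Bool.noConfusion hs
      rw [cutPotential_self]
      simpa using cutPotential_sub_one_pos o.clockwise hs hst
    · rw [cutPotential_add_one _ (by simpa using hjt), hj]
      simp

theorem Orient.isAcyc_iff (hn : 1 < n) {o : Orient (circGraph n)} :
    IsAcyc o ↔ (∃ s, o.clockwise s = true) ∧ ∃ t, o.clockwise t = false := by
  refine ⟨fun h => ⟨?_, ?_⟩, fun ⟨⟨_, hs⟩, ⟨_, ht⟩⟩ => isAcyc_of_clockwise hn hs ht⟩
  · by_contra! hcw
    have hccw : ∀ i, o.dir (i + 1) i := fun i => (dir_add_one_iff hn).2 (by simpa using hcw i)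
    exact h 0 (TransGen.swap 0 0
      (Fin.transGen_self_of_forall_add_one (r := Function.swap o.dir) hccw 0))
  · by_contra! hccw
    have hcw : ∀ i, o.dir i (i + 1) := fun i => clockwise_eq_true_iff.1 (by simpa using hccw i)
    exact h 0 (Fin.transGen_self_of_forall_add_one hcw 0)

noncomputable def Orient.numClockwise (o : Orient (circGraph n)) : ℕ :=
  Fintype.card {i // o.clockwise i = true}

theorem Orient.numClockwise_eq_of_clickRel (hn : 1 < n) {o o' : Orient (circGraph n)}
    (h : ClickRel o o') : o'.numClockwise = o.numClockwise := by
  obtain ⟨v, hv, rfl⟩ := clickRel_iff_exists_reverseAt.1 h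
  simp only [numClockwise, clockwise_reverseAt hn hv]
  exact Fintype.card_congr ((swap (v - 1) v).subtypeEquiv fun _ => Iff.rfl)

end Cycle

theorem exists_perm_eq_comp_of_card_eq {α : Type*} [Fintype α] {f g : α → Bool}
    (h : Fintype.card {x // f x = true} = Fintype.card {x // g x = true}) :
    ∃ σ : Perm α, g = f ∘ σ := by
  have hfiber : ∀ c, Fintype.card {x // g x = c} = Fintype.card {x // f x = c} := by
    rintro (_ | _)
    · simp only [← Bool.not_eq_true]
      rw [Fintype.card_subtype_compl, Fintype.card_subtype_compl, h]
    · exact h.symm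
  exact ⟨ofFiberEquiv fun c => Fintype.equivOfCardEq (hfiber c),
    funext fun x => (ofFiberEquiv_map _ x).symm⟩

theorem comp_swap_eq_self {α β : Type*} [DecidableEq α] {f : α → β} {x y : α}
    (h : f x = f y) : f ∘ swap x y = f := by
  rw [comp_swap_eq_update, h, Function.update_eq_self, ← h, Function.update_eq_self]

abbrev AcyclicCircOrient (n : ℕ) := {o : Orient (circGraph n) // IsAcyc o}

namespace AcyclicCircOrient

variable [NeZero n]

noncomputable def permute (hn : 3 ≤ n) (a : AcyclicCircOrient n) (σ : Perm (Fin n)) :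
    AcyclicCircOrient n :=
  ⟨circOrient hn (a.1.clockwise ∘ σ), by
    obtain ⟨⟨s, hs⟩, ⟨t, ht⟩⟩ := (Orient.isAcyc_iff (by omega)).1 a.2
    refine (Orient.isAcyc_iff (by omega)).2 ⟨⟨σ.symm s, ?_⟩, ⟨σ.symm t, ?_⟩⟩ <;>
      simpa [clockwise_circOrient]⟩

theorem clockwise_permute (hn : 3 ≤ n) (a : AcyclicCircOrient n) (σ : Perm (Fin n)) :
    (a.permute hn σ).1.clockwise = a.1.clockwise ∘ σ :=
  clockwise_circOrient hn _

theorem eq_permute_of_clockwise_eq (hn : 3 ≤ n) {a b : AcyclicCircOrient n} {σ : Perm (Fin n)}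
    (h : b.1.clockwise = a.1.clockwise ∘ σ) : b = a.permute hn σ :=
  Subtype.ext (Orient.clockwise_injective (by omega) (h.trans (clockwise_permute hn a σ).symm))

theorem permute_one (hn : 3 ≤ n) (a : AcyclicCircOrient n) : a.permute hn 1 = a :=
  (eq_permute_of_clockwise_eq hn rfl).symm

theorem permute_permute (hn : 3 ≤ n) (a : AcyclicCircOrient n) (σ τ : Perm (Fin n)) :
    (a.permute hn σ).permute hn τ = a.permute hn (σ * τ) :=
  eq_permute_of_clockwise_eq hn (by rw [clockwise_permute, clockwise_permute, Perm.coe_mul]; rfl)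

theorem clickRel_permute_swap (hn : 3 ≤ n) (a : AcyclicCircOrient n) {v : Fin n}
    (hprev : a.1.clockwise (v - 1) = false) (hv : a.1.clockwise v = true) :
    ClickRel a.1 (a.permute hn (swap (v - 1) v)).1 := by
  have hsrc : IsSource a.1 v := (Orient.isSource_iff (by omega)).2 ⟨hprev, hv⟩
  refine clickRel_iff_exists_reverseAt.2 ⟨v, hsrc, Orient.clockwise_injective (by omega) ?_⟩
  rw [clockwise_permute, Orient.clockwise_reverseAt (by omega) hsrc]

theorem eqvGen_permute_swap (hn : 3 ≤ n) (a : AcyclicCircOrient n) (v : Fin n) :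
    EqvGen (fun a b : AcyclicCircOrient n => ClickRel a.1 b.1) a
      (a.permute hn (swap (v - 1) v)) := by
  by_cases heq : a.1.clockwise (v - 1) = a.1.clockwise v
  · rw [← eq_permute_of_clockwise_eq hn (comp_swap_eq_self heq).symm]
    exact EqvGen.refl a
  obtain ⟨hprev, hv⟩ | ⟨hprev, hv⟩ :
      (a.1.clockwise (v - 1) = false ∧ a.1.clockwise v = true) ∨
        (a.1.clockwise (v - 1) = true ∧ a.1.clockwise v = false) := by
    revert heq
    cases a.1.clockwise (v - 1) <;> cases a.1.clockwise v <;> simp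
  · exact EqvGen.rel _ _ (clickRel_permute_swap hn a hprev hv)
  · set b := a.permute hn (swap (v - 1) v)
    have hba : b.permute hn (swap (v - 1) v) = a := by
      rw [permute_permute, swap_mul_self, permute_one]
    refine EqvGen.symm _ _ (hba ▸ EqvGen.rel _ _ (clickRel_permute_swap hn b ?_ ?_)) <;>
      simp [b, clockwise_permute, hprev, hv]

theorem eqvGen_permute (hn : 3 ≤ n) (a : AcyclicCircOrient n) (σ : Perm (Fin n)) :
    EqvGen (fun a b : AcyclicCircOrient n => ClickRel a.1 b.1) a (a.permute hn σ) := by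
  have hσ : σ ∈ Submonoid.closure (Set.range fun v : Fin n => swap (v - 1) v) := by
    rw [Fin.mclosure_swap_sub_one]
    trivial
  induction hσ using Submonoid.closure_induction generalizing a with
  | mem _ h =>
    obtain ⟨v, rfl⟩ := h
    exact eqvGen_permute_swap hn a v
  | one =>
    rw [permute_one]
    exact EqvGen.refl a
  | mul σ τ _ _ hσ hτ =>
    rw [← permute_permute]
    exact (hσ a).trans _ _ _ (hτ _)

theorem eqvGen_setoid_eq_ker (hn : 3 ≤ n) :
    EqvGen.setoid (fun a b : AcyclicCircOrient n => ClickRel a.1 b.1) =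
      Setoid.ker fun a => a.1.numClockwise := by
  refine le_antisymm
    (Setoid.eqvGen_le fun _ _ h => (Orient.numClockwise_eq_of_clickRel (by omega) h).symm)
    (Setoid.le_def.2 fun {a b} h => ?_)
  obtain ⟨σ, hσ⟩ := exists_perm_eq_comp_of_card_eq h
  rw [eq_permute_of_clockwise_eq hn hσ]
  exact eqvGen_permute hn a σ

theorem range_numClockwise (hn : 3 ≤ n) :
    Set.range (fun a : AcyclicCircOrient n => a.1.numClockwise) = Set.Icc 1 (n - 1) := by
  ext k
  constructor
  · rintro ⟨a, rfl⟩
    obtain ⟨⟨s, hs⟩, ⟨t, ht⟩⟩ := (Orient.isAcyc_iff (by omega)).1 a.2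
    have hpos : 0 < a.1.numClockwise := Fintype.card_pos_iff.2 ⟨⟨s, hs⟩⟩
    have hlt : a.1.numClockwise < Fintype.card (Fin n) :=
      Fintype.card_subtype_lt (x := t) (by simp [ht])
    rw [Fintype.card_fin] at hlt
    exact ⟨hpos, show a.1.numClockwise ≤ n - 1 by omega⟩
  · rintro ⟨hk, hkn⟩
    let f : Fin n → Bool := fun i => decide (i.val < k)
    have hacyc : IsAcyc (circOrient hn f) := (Orient.isAcyc_iff (by omega)).2
      ⟨⟨⟨0, by omega⟩, by
          rw [clockwise_circOrient]
          exact decide_eq_true (show 0 < k by omega)⟩,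
        ⟨⟨n - 1, by omega⟩, by simpa [clockwise_circOrient, f] using hkn⟩⟩
    refine ⟨⟨circOrient hn f, hacyc⟩, ?_⟩
    simp only [Orient.numClockwise, clockwise_circOrient, f, decide_eq_true_eq]
    exact Fintype.card_fin_lt_of_le (by omega)

end AcyclicCircOrient

/-- For the `n`-cycle (`n ≥ 3`), the number of κ-equivalence classes of acyclic
orientations under source-to-sink operations is `n - 1`. -/
theorem stmt10 {n : ℕ} (hn : 3 ≤ n) :
    Nat.card (Quotient (Relation.EqvGen.setoid
      (fun a b : {o : Orient (circGraph n) // IsAcyc o} =>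
        ClickRel a.1 b.1))) = n - 1 := by
  have : NeZero n := ⟨by omega⟩
  rw [AcyclicCircOrient.eqvGen_setoid_eq_ker hn, Nat.card_congr (Setoid.quotientKerEquivRange _),
    AcyclicCircOrient.range_numClockwise hn, Nat.card_coe_set_eq, Set.ncard_Icc_nat]
  omega
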